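/- arXiv:1909.03739 — 3 statements merged into one kernel-verified Lean document; each statement's English description precedes it below -/
import Mathlib

section
/- Suppose x, u, w, z, a are finite random variables with the conditional independence x ⊥ (w,z) | (a,u). Then for every fixed value a of the action, the matrix identity P(W, z | a, U)·P(U | a, X) = P(W, z | a, X) holds, where (P(W, z | a, U))_{ij} = P(w_i, z | a, u_j), (P(U|a,X))_{jk} = P(u_j | a, x_k), and (P(W,z|a,X))_{ik} = P(w_i, z | a, x_k). Consequently, if P(U | a, X) is a square invertible matrix, then P(W, z | a, U) = P(W, z | a, X)·P(U | a, X)^{-1}. -/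
open Finset Matrix
open scoped Classical

noncomputable def Pr {Ω : Type*} [Fintype Ω] (μ : Ω → ℝ) (E : Ω → Prop) : ℝ :=
  ∑ ω, if E ω then μ ω else 0

noncomputable def cPr {Ω : Type*} [Fintype Ω] (μ : Ω → ℝ) (E F : Ω → Prop) : ℝ :=
  Pr μ (fun ω => E ω ∧ F ω) / Pr μ F

/-!
Conditioning on `x = k` as well, the `j`-th term of the product is
`P(w_i, z | a, u_j, x_k) P(u_j | a, x_k)` by conditional independence, which the chain rule
turns into `P(w_i, z, u_j | a, x_k)`; summing over `j` gives `P(w_i, z | a, x_k)`.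
The second claim follows by cancelling the invertible factor.
-/

section Probability

variable {Ω : Type*} [Fintype Ω] {μ : Ω → ℝ}

lemma Pr_congr {E F : Ω → Prop} (h : ∀ ω, E ω ↔ F ω) : Pr μ E = Pr μ F :=
  Finset.sum_congr rfl fun ω _ => if_congr (h ω) rfl rfl

lemma cPr_congr {E E' F F' : Ω → Prop} (hE : ∀ ω, E ω ↔ E' ω) (hF : ∀ ω, F ω ↔ F' ω) :
    cPr μ E F = cPr μ E' F' := by
  unfold cPr
  rw [Pr_congr fun ω => and_congr (hE ω) (hF ω), Pr_congr hF]

lemma Pr_nonneg (hμ : ∀ ω, 0 ≤ μ ω) (E : Ω → Prop) : 0 ≤ Pr μ E :=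
  Finset.sum_nonneg fun ω _ => by split_ifs <;> simp [hμ ω]

lemma Pr_mono (hμ : ∀ ω, 0 ≤ μ ω) {E F : Ω → Prop} (h : ∀ ω, E ω → F ω) :
    Pr μ E ≤ Pr μ F :=
  Finset.sum_le_sum fun ω _ => by
    by_cases hE : E ω
    · simp [hE, h ω hE]
    · split_ifs <;> simp [hμ ω]

lemma sum_Pr_and_eq {β : Type*} [Fintype β] (E : Ω → Prop) (u : Ω → β) :
    ∑ j, Pr μ (fun ω => E ω ∧ u ω = j) = Pr μ E := by
  unfold Pr
  rw [Finset.sum_comm]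
  refine Finset.sum_congr rfl fun ω _ => ?_
  by_cases h : E ω <;> simp [h]

lemma sum_cPr_and_eq {β : Type*} [Fintype β] (E G : Ω → Prop) (u : Ω → β) :
    ∑ j, cPr μ (fun ω => E ω ∧ u ω = j) G = cPr μ E G := by
  unfold cPr
  rw [← Finset.sum_div, ← sum_Pr_and_eq (fun ω => E ω ∧ G ω) u]
  congr 1
  exact Finset.sum_congr rfl fun j _ => Pr_congr fun ω => and_right_comm

lemma cPr_and_mul_cPr (hμ : ∀ ω, 0 ≤ μ ω) (E F G : Ω → Prop) :
    cPr μ E (fun ω => F ω ∧ G ω) * cPr μ F G = cPr μ (fun ω => E ω ∧ F ω) G := by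
  unfold cPr
  rw [Pr_congr (E := fun ω => (E ω ∧ F ω) ∧ G ω) fun ω => and_assoc]
  by_cases hFG : Pr μ (fun ω => F ω ∧ G ω) = 0
  · have hEFG : Pr μ (fun ω => E ω ∧ F ω ∧ G ω) = 0 :=
      le_antisymm (hFG ▸ Pr_mono hμ fun ω h => h.2) (Pr_nonneg hμ _)
    simp [hFG, hEFG]
  · field_simp

lemma sum_cPr_mul_cPr_of_condIndep (hμ : ∀ ω, 0 ≤ μ ω) {β : Type*} [Fintype β]
    (E G H : Ω → Prop) (u : Ω → β)
    (hCI : ∀ j, cPr μ E (fun ω => G ω ∧ u ω = j ∧ H ω) = cPr μ E (fun ω => G ω ∧ u ω = j)) :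
    ∑ j, cPr μ E (fun ω => G ω ∧ u ω = j) * cPr μ (fun ω => u ω = j) (fun ω => G ω ∧ H ω) =
      cPr μ E (fun ω => G ω ∧ H ω) := by
  calc ∑ j, cPr μ E (fun ω => G ω ∧ u ω = j) * cPr μ (fun ω => u ω = j) (fun ω => G ω ∧ H ω)
      = ∑ j, cPr μ E (fun ω => u ω = j ∧ G ω ∧ H ω) *
          cPr μ (fun ω => u ω = j) (fun ω => G ω ∧ H ω) := by
        refine Finset.sum_congr rfl fun j _ => ?_
        rw [← hCI j, cPr_congr (fun _ => Iff.rfl) fun ω => and_left_comm]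
    _ = ∑ j, cPr μ (fun ω => E ω ∧ u ω = j) (fun ω => G ω ∧ H ω) :=
        Finset.sum_congr rfl fun j _ => cPr_and_mul_cPr hμ _ _ _
    _ = cPr μ E (fun ω => G ω ∧ H ω) := sum_cPr_and_eq _ _ _

lemma cPr_matrix_mul_of_condIndep (hμ : ∀ ω, 0 ≤ μ ω) {ι β γ : Type*} [Fintype β]
    (E : ι → Ω → Prop) (G : Ω → Prop) (u : Ω → β) (x : Ω → γ)
    (hCI : ∀ i j k, cPr μ (E i) (fun ω => G ω ∧ u ω = j ∧ x ω = k) =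
      cPr μ (E i) (fun ω => G ω ∧ u ω = j)) :
    (Matrix.of fun i j => cPr μ (E i) (fun ω => G ω ∧ u ω = j)) *
        (Matrix.of fun j k => cPr μ (fun ω => u ω = j) (fun ω => G ω ∧ x ω = k)) =
      Matrix.of fun i k => cPr μ (E i) (fun ω => G ω ∧ x ω = k) := by
  ext i k
  exact sum_cPr_mul_cPr_of_condIndep hμ _ _ _ u fun j => hCI i j k

end Probability

theorem proxy_matrix_factorization_general
    {Ω : Type*} [Fintype Ω] (μ : Ω → ℝ) {n nw nz : ℕ} {Aty : Type*}
    (x : Ω → Fin n) (u : Ω → Fin n) (w : Ω → Fin nw) (z : Ω → Fin nz) (a : Ω → Aty)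
    (hμ : ∀ ω, 0 ≤ μ ω)
    (av : Aty) (zv : Fin nz)
    -- conditional independence x ⊥ (w,z) | (a,u):  P(w,z | a,u,x) = P(w,z | a,u)
    (hCI : ∀ (wv : Fin nw) (zv' : Fin nz) (j k : Fin n),
      cPr μ (fun ω => w ω = wv ∧ z ω = zv')
          (fun ω => a ω = av ∧ u ω = j ∧ x ω = k) =
        cPr μ (fun ω => w ω = wv ∧ z ω = zv') (fun ω => a ω = av ∧ u ω = j)) :
    ((Matrix.of fun (i : Fin nw) (j : Fin n) =>
        cPr μ (fun ω => w ω = i ∧ z ω = zv) (fun ω => a ω = av ∧ u ω = j)) *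
      (Matrix.of fun (j k : Fin n) =>
        cPr μ (fun ω => u ω = j) (fun ω => a ω = av ∧ x ω = k)) =
      Matrix.of fun (i : Fin nw) (k : Fin n) =>
        cPr μ (fun ω => w ω = i ∧ z ω = zv) (fun ω => a ω = av ∧ x ω = k)) ∧
    (IsUnit (Matrix.of fun (j k : Fin n) =>
        cPr μ (fun ω => u ω = j) (fun ω => a ω = av ∧ x ω = k)).det →
      (Matrix.of fun (i : Fin nw) (j : Fin n) =>
        cPr μ (fun ω => w ω = i ∧ z ω = zv) (fun ω => a ω = av ∧ u ω = j)) =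
      (Matrix.of fun (i : Fin nw) (k : Fin n) =>
        cPr μ (fun ω => w ω = i ∧ z ω = zv) (fun ω => a ω = av ∧ x ω = k)) *
      (Matrix.of fun (j k : Fin n) =>
        cPr μ (fun ω => u ω = j) (fun ω => a ω = av ∧ x ω = k))⁻¹) := by
  have hprod := cPr_matrix_mul_of_condIndep hμ (fun i ω => w ω = i ∧ z ω = zv)
    (fun ω => a ω = av) u x fun i j k => hCI i zv j k
  beta_reduce at hprod
  exact ⟨hprod, fun hdet => by rw [← hprod, Matrix.mul_nonsing_inv_cancel_right _ _ hdet]⟩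

/-- if `x ⊥ (w,z) | (a,u)` then
`P(W, z | a, U) * P(U | a, X) = P(W, z | a, X)`, and if `P(U | a, X)` is invertible then
`P(W, z | a, U) = P(W, z | a, X) * P(U | a, X)⁻¹`.
Here `u` and `x` take values in sets of the same cardinality `n`. -/
theorem proxy_matrix_factorization
    {Ω : Type*} [Fintype Ω] (μ : Ω → ℝ) {n nw nz : ℕ} {Aty : Type*}
    (x : Ω → Fin n) (u : Ω → Fin n) (w : Ω → Fin nw) (z : Ω → Fin nz) (a : Ω → Aty)
    (hμ : ∀ ω, 0 ≤ μ ω) (hsum : ∑ ω, μ ω = 1)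
    (av : Aty) (zv : Fin nz)
    -- positivity of the conditioning events (a, u_j) and (a, x_k)
    (hposu : ∀ j, 0 < Pr μ (fun ω => a ω = av ∧ u ω = j))
    (hposx : ∀ k, 0 < Pr μ (fun ω => a ω = av ∧ x ω = k))
    -- conditional independence x ⊥ (w,z) | (a,u):  P(w,z | a,u,x) = P(w,z | a,u)
    (hCI : ∀ (wv : Fin nw) (zv' : Fin nz) (j k : Fin n),
      cPr μ (fun ω => w ω = wv ∧ z ω = zv')
          (fun ω => a ω = av ∧ u ω = j ∧ x ω = k) =
        cPr μ (fun ω => w ω = wv ∧ z ω = zv') (fun ω => a ω = av ∧ u ω = j)) :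
    ((Matrix.of fun (i : Fin nw) (j : Fin n) =>
        cPr μ (fun ω => w ω = i ∧ z ω = zv) (fun ω => a ω = av ∧ u ω = j)) *
      (Matrix.of fun (j k : Fin n) =>
        cPr μ (fun ω => u ω = j) (fun ω => a ω = av ∧ x ω = k)) =
      Matrix.of fun (i : Fin nw) (k : Fin n) =>
        cPr μ (fun ω => w ω = i ∧ z ω = zv) (fun ω => a ω = av ∧ x ω = k)) ∧
    (IsUnit (Matrix.of fun (j k : Fin n) =>
        cPr μ (fun ω => u ω = j) (fun ω => a ω = av ∧ x ω = k)).det →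
      (Matrix.of fun (i : Fin nw) (j : Fin n) =>
        cPr μ (fun ω => w ω = i ∧ z ω = zv) (fun ω => a ω = av ∧ u ω = j)) =
      (Matrix.of fun (i : Fin nw) (k : Fin n) =>
        cPr μ (fun ω => w ω = i ∧ z ω = zv) (fun ω => a ω = av ∧ x ω = k)) *
      (Matrix.of fun (j k : Fin n) =>
        cPr μ (fun ω => u ω = j) (fun ω => a ω = av ∧ x ω = k))⁻¹) :=
  proxy_matrix_factorization_general μ x u w z a hμ av zv hCI
end

section
/- Suppose x, y, u, a are finite random variables with the conditional independence x ⊥ y | (a,u). Then for every fixed action value a, the matrix identity P(Y | a, U)·P(U | a, X) = P(Y | a, X) holds. Consequently, if P(Y | a, U) is square and invertible, then P(U | a, X) = P(Y | a, U)^{-1}·P(Y | a, X). -/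
/-! Conditioning on `A ∧ u = j` and summing over `j` gives
`∑ⱼ P(E | A, u = j) P(u = j | A, X) = P(E | A, X)` as soon as `E ⊥ X | (A, u)`, since each
summand is `P(E, A, u = j, X) / P(A, X)`; this is the matrix identity entrywise. -/

open Finset Matrix
open scoped Classical

section Probability

variable {Ω : Type*} [Fintype Ω] {μ : Ω → ℝ}

lemma Pr_eq_sum_Pr_and {β : Type*} [Fintype β] (u : Ω → β) (E : Ω → Prop) :
    Pr μ E = ∑ j, Pr μ (fun ω => E ω ∧ u ω = j) := by
  unfold Pr
  rw [Finset.sum_comm]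
  refine Finset.sum_congr rfl fun ω _ => ?_
  by_cases hE : E ω <;> simp [hE]

/-- On a null event `F ∧ G` both sides vanish: the right one since `E ∧ F ∧ G ⊆ F ∧ G`. -/
lemma cPr_mul_Pr_eq_Pr_of_cPr_and_eq (hμ : ∀ ω, 0 ≤ μ ω) {E F G : Ω → Prop}
    (hEG : cPr μ E (fun ω => F ω ∧ G ω) = cPr μ E F) :
    cPr μ E F * Pr μ (fun ω => F ω ∧ G ω) = Pr μ (fun ω => E ω ∧ F ω ∧ G ω) := by
  by_cases hz : Pr μ (fun ω => F ω ∧ G ω) = 0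
  · rw [hz, mul_zero]
    exact le_antisymm (hz ▸ Pr_mono hμ fun ω h => h.2) (Pr_nonneg hμ _) |>.symm
  · rw [← hEG, cPr, div_mul_cancel₀ _ hz]

lemma sum_cPr_mul_cPr_eq_cPr_of_condIndep (hμ : ∀ ω, 0 ≤ μ ω) {β : Type*} [Fintype β]
    (u : Ω → β) {E A X : Ω → Prop}
    (hCI : ∀ j, cPr μ E (fun ω => A ω ∧ u ω = j ∧ X ω) = cPr μ E (fun ω => A ω ∧ u ω = j)) :
    ∑ j, cPr μ E (fun ω => A ω ∧ u ω = j) * cPr μ (fun ω => u ω = j) (fun ω => A ω ∧ X ω) =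
      cPr μ E (fun ω => A ω ∧ X ω) := by
  have hterm : ∀ j, cPr μ E (fun ω => A ω ∧ u ω = j) *
      cPr μ (fun ω => u ω = j) (fun ω => A ω ∧ X ω) =
      Pr μ (fun ω => (E ω ∧ A ω ∧ X ω) ∧ u ω = j) / Pr μ (fun ω => A ω ∧ X ω) := by
    intro j
    have hjoint := cPr_mul_Pr_eq_Pr_of_cPr_and_eq hμ (F := fun ω => A ω ∧ u ω = j) (G := X)
      (by simpa only [and_assoc] using hCI j)
    have hu : cPr μ (fun ω => u ω = j) (fun ω => A ω ∧ X ω) =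
        Pr μ (fun ω => (A ω ∧ u ω = j) ∧ X ω) / Pr μ (fun ω => A ω ∧ X ω) :=
      congrArg (· / _) (Pr_congr fun ω => by tauto)
    rw [hu, ← mul_div_assoc, hjoint]
    exact congrArg (· / _) (Pr_congr fun ω => by tauto)
  rw [Finset.sum_congr rfl fun j _ => hterm j, ← Finset.sum_div, ← Pr_eq_sum_Pr_and, cPr]

end Probability

lemma Matrix.eq_nonsing_inv_mul_of_mul_eq {m ι R : Type*} [Fintype m] [DecidableEq m]
    [CommRing R] {A : Matrix m m R} {B C : Matrix m ι R} (h : A * B = C) (hA : IsUnit A.det) :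
    B = A⁻¹ * C := by
  rw [← h, Matrix.nonsing_inv_mul_cancel_left _ _ hA]

theorem proxy_matrix_factorization_Y_general
    {Ω : Type*} [Fintype Ω] (μ : Ω → ℝ) {n : ℕ} {Aty : Type*}
    (x : Ω → Fin n) (y : Ω → Fin n) (u : Ω → Fin n) (a : Ω → Aty)
    (hμ : ∀ ω, 0 ≤ μ ω)
    (av : Aty)
    -- conditional independence x ⊥ y | (a,u):  P(y | a,u,x) = P(y | a,u)
    (hCI : ∀ (yv j k : Fin n),
      cPr μ (fun ω => y ω = yv) (fun ω => a ω = av ∧ u ω = j ∧ x ω = k) =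
        cPr μ (fun ω => y ω = yv) (fun ω => a ω = av ∧ u ω = j)) :
    ((Matrix.of fun (i j : Fin n) =>
        cPr μ (fun ω => y ω = i) (fun ω => a ω = av ∧ u ω = j)) *
      (Matrix.of fun (j k : Fin n) =>
        cPr μ (fun ω => u ω = j) (fun ω => a ω = av ∧ x ω = k)) =
      Matrix.of fun (i k : Fin n) =>
        cPr μ (fun ω => y ω = i) (fun ω => a ω = av ∧ x ω = k)) ∧
    (IsUnit (Matrix.of fun (i j : Fin n) =>
        cPr μ (fun ω => y ω = i) (fun ω => a ω = av ∧ u ω = j)).det →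
      (Matrix.of fun (j k : Fin n) =>
        cPr μ (fun ω => u ω = j) (fun ω => a ω = av ∧ x ω = k)) =
      (Matrix.of fun (i j : Fin n) =>
        cPr μ (fun ω => y ω = i) (fun ω => a ω = av ∧ u ω = j))⁻¹ *
      (Matrix.of fun (i k : Fin n) =>
        cPr μ (fun ω => y ω = i) (fun ω => a ω = av ∧ x ω = k))) := by
  have hmul : (Matrix.of fun (i j : Fin n) =>
        cPr μ (fun ω => y ω = i) (fun ω => a ω = av ∧ u ω = j)) *
      (Matrix.of fun (j k : Fin n) =>
        cPr μ (fun ω => u ω = j) (fun ω => a ω = av ∧ x ω = k)) =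
      Matrix.of fun (i k : Fin n) =>
        cPr μ (fun ω => y ω = i) (fun ω => a ω = av ∧ x ω = k) := by
    ext i k
    exact sum_cPr_mul_cPr_eq_cPr_of_condIndep hμ u fun j => hCI i j k
  exact ⟨hmul, Matrix.eq_nonsing_inv_mul_of_mul_eq hmul⟩

/-- if `x ⊥ y | (a,u)` then `P(Y|a,U) * P(U|a,X) = P(Y|a,X)`; consequently, if
`P(Y|a,U)` is invertible then `P(U|a,X) = P(Y|a,U)⁻¹ * P(Y|a,X)`.
Here `x, y, u` take values in sets of common cardinality `n`. -/
theorem proxy_matrix_factorization_Y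
    {Ω : Type*} [Fintype Ω] (μ : Ω → ℝ) {n : ℕ} {Aty : Type*}
    (x : Ω → Fin n) (y : Ω → Fin n) (u : Ω → Fin n) (a : Ω → Aty)
    (hμ : ∀ ω, 0 ≤ μ ω) (hsum : ∑ ω, μ ω = 1)
    (av : Aty)
    (hposu : ∀ j, 0 < Pr μ (fun ω => a ω = av ∧ u ω = j))
    (hposx : ∀ k, 0 < Pr μ (fun ω => a ω = av ∧ x ω = k))
    -- conditional independence x ⊥ y | (a,u):  P(y | a,u,x) = P(y | a,u)
    (hCI : ∀ (yv j k : Fin n),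
      cPr μ (fun ω => y ω = yv) (fun ω => a ω = av ∧ u ω = j ∧ x ω = k) =
        cPr μ (fun ω => y ω = yv) (fun ω => a ω = av ∧ u ω = j)) :
    ((Matrix.of fun (i j : Fin n) =>
        cPr μ (fun ω => y ω = i) (fun ω => a ω = av ∧ u ω = j)) *
      (Matrix.of fun (j k : Fin n) =>
        cPr μ (fun ω => u ω = j) (fun ω => a ω = av ∧ x ω = k)) =
      Matrix.of fun (i k : Fin n) =>
        cPr μ (fun ω => y ω = i) (fun ω => a ω = av ∧ x ω = k)) ∧
    (IsUnit (Matrix.of fun (i j : Fin n) =>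
        cPr μ (fun ω => y ω = i) (fun ω => a ω = av ∧ u ω = j)).det →
      (Matrix.of fun (j k : Fin n) =>
        cPr μ (fun ω => u ω = j) (fun ω => a ω = av ∧ x ω = k)) =
      (Matrix.of fun (i j : Fin n) =>
        cPr μ (fun ω => y ω = i) (fun ω => a ω = av ∧ u ω = j))⁻¹ *
      (Matrix.of fun (i k : Fin n) =>
        cPr μ (fun ω => y ω = i) (fun ω => a ω = av ∧ x ω = k))) :=
  proxy_matrix_factorization_Y_general μ x y u a hμ av hCI
end

section
/- Let P^b and P^e be behavior and evaluation measures over observable trajectories τ^o = (z_0, a_0, ..., z_L, a_L) of a POMDP. Suppose for all i < L and all observable partial trajectories τ^o_i, P^b(z_{i+1} | τ^o_i) = P^e(z_{i+1} | τ^o_i), and P^b(z_0) = P^e(z_0). Then for any observable trajectory τ^o with P^b(τ^o) > 0 and P^b(a_i | h_i^o) > 0 for all i, P^e(τ^o) = P^b(τ^o) · ∏_{i=0}^{L} [π_e(a_i | h_i^o) / P^b(a_i | h_i^o)]. -/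
open Finset
open scoped Classical

/-- observable importance sampling identity. Both measures over observable
trajectories factorize as `P(τ^o) = P(z_0) ∏ P(z_{i+1}|τ^o_i) ∏ P(a_i|h_i^o)`. If the
observation conditionals and the initial observation distribution coincide under `P^b`
and `P^e`, then for every observable trajectory with `P^b(τ^o) > 0` and
`P^b(a_i|h_i^o) > 0` for all `i`,
`P^e(τ^o) = P^b(τ^o) * ∏ πe(a_i|h_i^o) / P^b(a_i|h_i^o)`. -/
theorem observable_importance_sampling
    {Z A : Type*} [Fintype Z] [Fintype A] (L : ℕ)
    (ρb ρe : Z → ℝ)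
    -- Tb i z a = P^b(z_{i+1} | τ^o_i), Te the same for P^e; they depend only on
    -- z_0,…,z_{i+1} and a_0,…,a_i
    (Tb Te : Fin L → (Fin (L+1) → Z) → (Fin (L+1) → A) → ℝ)
    -- Ab i z a = P^b(a_i | h_i^o), πe i z a = π_e(a_i | h_i^o); they depend only on
    -- z_0,…,z_i and a_0,…,a_i
    (Ab πe : Fin (L+1) → (Fin (L+1) → Z) → (Fin (L+1) → A) → ℝ)
    (hTb : ∀ (i : Fin L) (z z' : Fin (L+1) → Z) (a a' : Fin (L+1) → A),
      (∀ j : Fin (L+1), (j : ℕ) ≤ (i : ℕ) + 1 → z j = z' j) →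
      (∀ j : Fin (L+1), (j : ℕ) ≤ (i : ℕ) → a j = a' j) → Tb i z a = Tb i z' a')
    (hTe : ∀ (i : Fin L) (z z' : Fin (L+1) → Z) (a a' : Fin (L+1) → A),
      (∀ j : Fin (L+1), (j : ℕ) ≤ (i : ℕ) + 1 → z j = z' j) →
      (∀ j : Fin (L+1), (j : ℕ) ≤ (i : ℕ) → a j = a' j) → Te i z a = Te i z' a')
    (hAb : ∀ (i : Fin (L+1)) (z z' : Fin (L+1) → Z) (a a' : Fin (L+1) → A),
      (∀ j, j ≤ i → z j = z' j) → (∀ j, j ≤ i → a j = a' j) → Ab i z a = Ab i z' a')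
    (hπe : ∀ (i : Fin (L+1)) (z z' : Fin (L+1) → Z) (a a' : Fin (L+1) → A),
      (∀ j, j ≤ i → z j = z' j) → (∀ j, j ≤ i → a j = a' j) → πe i z a = πe i z' a')
    -- the sufficient-statistic assumptions
    (h0 : ρb = ρe)
    (hT : Tb = Te)
    (Pb Pe : (Fin (L+1) → Z) → (Fin (L+1) → A) → ℝ)
    (hPb : ∀ z a, Pb z a =
      ρb (z 0) * (∏ i : Fin L, Tb i z a) * ∏ i : Fin (L+1), Ab i z a)
    (hPe : ∀ z a, Pe z a =
      ρe (z 0) * (∏ i : Fin L, Te i z a) * ∏ i : Fin (L+1), πe i z a) :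
    ∀ z a, 0 < Pb z a → (∀ i, 0 < Ab i z a) →
      Pe z a = Pb z a * ∏ i : Fin (L+1), πe i z a / Ab i z a := by
  intro z a hpos hA
  have hAne : (∏ i : Fin (L+1), Ab i z a) ≠ 0 :=
    Finset.prod_ne_zero_iff.mpr fun i _ => (hA i).ne'
  rw [hPe, hPb, ← h0, ← hT, Finset.prod_div_distrib]
  field_simp
end
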